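/- arXiv:2602.21785 — 8 statements merged into one kernel-verified Lean document; each statement's English description precedes it below -/
import Mathlib

section
/- Let 0 < e < π/2 and let F₁ = (cos e, -sin e, 0), F₂ = (cos e, sin e, 0) be two points on the equator of S². If a point P = (x,y,z) on S² satisfies dist(P,F₁) + dist(P,F₂) = 2d with e < d < π/2, then x²/(cos²d/cos²e) + y²/(sin²d/sin²e) = 1. -/
open Real

/-- Euclidean dot product on ℝ³ (as ℝ × ℝ × ℝ). -/
noncomputable def dot3 (P Q : ℝ × ℝ × ℝ) : ℝ :=
  P.1 * Q.1 + P.2.1 * Q.2.1 + P.2.2 * Q.2.2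

/-- Geodesic distance on the unit sphere S². -/
noncomputable def sdist (P Q : ℝ × ℝ × ℝ) : ℝ := Real.arccos (dot3 P Q)

/-- Membership in the unit sphere S² ⊂ ℝ³. -/
def onS2 (P : ℝ × ℝ × ℝ) : Prop := dot3 P P = 1

theorem spherical_ellipse_canonical_equation (d e x y z : ℝ)
    (he0 : 0 < e) (hed : e < d) (hdπ : d < π / 2)
    (hP : onS2 (x, y, z))
    (hsum : sdist (x, y, z) (Real.cos e, -Real.sin e, 0)
          + sdist (x, y, z) (Real.cos e, Real.sin e, 0) = 2 * d) :
    x ^ 2 / (Real.cos d ^ 2 / Real.cos e ^ 2)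
      + y ^ 2 / (Real.sin d ^ 2 / Real.sin e ^ 2) = 1 := by
  have hsphere : x ^ 2 + y ^ 2 + z ^ 2 = 1 := by
    have := hP; simp only [onS2, dot3] at this; nlinarith [this]
  have hcs : Real.sin e ^ 2 + Real.cos e ^ 2 = 1 := Real.sin_sq_add_cos_sq e
  set a := x * Real.cos e - y * Real.sin e with ha
  set b := x * Real.cos e + y * Real.sin e with hb
  have ha2 : a ^ 2 ≤ 1 := by
    rw [ha]; nlinarith [sq_nonneg (x * Real.sin e + y * Real.cos e), sq_nonneg z]
  have hb2 : b ^ 2 ≤ 1 := by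
    rw [hb]; nlinarith [sq_nonneg (x * Real.sin e - y * Real.cos e), sq_nonneg z]
  have haL : -1 ≤ a := by nlinarith [ha2]
  have haU : a ≤ 1 := by nlinarith [ha2]
  have hbL : -1 ≤ b := by nlinarith [hb2]
  have hbU : b ≤ 1 := by nlinarith [hb2]
  set r₁ := Real.arccos a with hr₁
  set r₂ := Real.arccos b with hr₂
  have hc1 : Real.cos r₁ = a := Real.cos_arccos haL haU
  have hc2 : Real.cos r₂ = b := Real.cos_arccos hbL hbU
  have hsum' : r₁ + r₂ = 2 * d := by
    have e1 : sdist (x, y, z) (Real.cos e, -Real.sin e, 0) = r₁ := by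
      simp only [sdist, dot3, hr₁, ha]; ring_nf
    have e2 : sdist (x, y, z) (Real.cos e, Real.sin e, 0) = r₂ := by
      simp only [sdist, dot3, hr₂, hb]; ring_nf
    rw [e1, e2] at hsum; exact hsum
  have hhalf : (r₁ + r₂) / 2 = d := by linarith
  set t := (r₁ - r₂) / 2 with ht
  have hadd : a + b = 2 * Real.cos d * Real.cos t := by
    rw [← hc1, ← hc2, Real.cos_add_cos, hhalf]
  have hsub : a - b = -2 * Real.sin d * Real.sin t := by
    rw [← hc1, ← hc2, Real.cos_sub_cos, hhalf]
  have hx : x * Real.cos e = Real.cos d * Real.cos t := by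
    rw [ha, hb] at hadd; linarith
  have hy : y * Real.sin e = Real.sin d * Real.sin t := by
    rw [ha, hb] at hsub; linarith
  have hd0 : 0 < d := lt_trans he0 hed
  have hcd : 0 < Real.cos d := Real.cos_pos_of_mem_Ioo ⟨by linarith [Real.pi_pos], hdπ⟩
  have hsd : 0 < Real.sin d := Real.sin_pos_of_pos_of_lt_pi hd0 (by linarith [Real.pi_pos])
  have hce : 0 < Real.cos e := Real.cos_pos_of_mem_Ioo ⟨by linarith [Real.pi_pos], by linarith⟩
  have hse : 0 < Real.sin e := Real.sin_pos_of_pos_of_lt_pi he0 (by linarith [Real.pi_pos])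
  have hpt : Real.sin t ^ 2 + Real.cos t ^ 2 = 1 := Real.sin_sq_add_cos_sq t
  have hx2 : (x * Real.cos e) ^ 2 = (Real.cos d * Real.cos t) ^ 2 := by rw [hx]
  have hy2 : (y * Real.sin e) ^ 2 = (Real.sin d * Real.sin t) ^ 2 := by rw [hy]
  have g1 : x ^ 2 / (Real.cos d ^ 2 / Real.cos e ^ 2) = Real.cos t ^ 2 := by
    rw [div_div_eq_mul_div,
      show x ^ 2 * Real.cos e ^ 2 = Real.cos d ^ 2 * Real.cos t ^ 2 from by
        linear_combination hx2]
    exact mul_div_cancel_left₀ _ (by positivity)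
  have g2 : y ^ 2 / (Real.sin d ^ 2 / Real.sin e ^ 2) = Real.sin t ^ 2 := by
    rw [div_div_eq_mul_div,
      show y ^ 2 * Real.sin e ^ 2 = Real.sin d ^ 2 * Real.sin t ^ 2 from by
        linear_combination hy2]
    exact mul_div_cancel_left₀ _ (by positivity)
  rw [g1, g2]; linarith [hpt]
end

section
/- Let 0 < d < e < π/2 and let F₁ = (cos e, -sin e, 0), F₂ = (cos e, sin e, 0) on S². If a point P = (x,y,z) on S² satisfies |dist(P,F₁) - dist(P,F₂)| = 2d, then x²/(cos²d/cos²e) + y²/(sin²d/sin²e) = 1. -/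
open Real

theorem spherical_hyperbola_canonical_equation (d e x y z : ℝ)
    (hd0 : 0 < d) (hde : d < e) (heπ : e < π / 2)
    (hP : onS2 (x, y, z))
    (hdiff : |sdist (x, y, z) (Real.cos e, -Real.sin e, 0)
            - sdist (x, y, z) (Real.cos e, Real.sin e, 0)| = 2 * d) :
    x ^ 2 / (Real.cos d ^ 2 / Real.cos e ^ 2)
      + y ^ 2 / (Real.sin d ^ 2 / Real.sin e ^ 2) = 1 := by
  have hdπ : d < π / 2 := hde.trans heπ
  have hsd : 0 < Real.sin d := Real.sin_pos_of_pos_of_lt_pi hd0 (by linarith [Real.pi_pos])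
  have hcd : 0 < Real.cos d := Real.cos_pos_of_mem_Ioo ⟨by linarith [Real.pi_pos], hdπ⟩
  have hce : 0 < Real.cos e := Real.cos_pos_of_mem_Ioo ⟨by linarith [Real.pi_pos], heπ⟩
  have hse : 0 < Real.sin e := Real.sin_pos_of_pos_of_lt_pi (by linarith) (by linarith [Real.pi_pos])
  have hP' : x ^ 2 + y ^ 2 + z ^ 2 = 1 := by
    have h := hP
    simp only [onS2, dot3] at h
    linear_combination h
  set u := x * Real.cos e - y * Real.sin e with hu
  set v := x * Real.cos e + y * Real.sin e with hv
  have hpyth : Real.sin e ^ 2 + Real.cos e ^ 2 = 1 := Real.sin_sq_add_cos_sq e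
  have h1u : 1 - u ^ 2 = z ^ 2 + (x * Real.sin e + y * Real.cos e) ^ 2 := by
    rw [hu]; linear_combination -hP' - (x^2 + y^2) * hpyth
  have h1v : 1 - v ^ 2 = z ^ 2 + (x * Real.sin e - y * Real.cos e) ^ 2 := by
    rw [hv]; linear_combination -hP' - (x^2 + y^2) * hpyth
  have h1unn : 0 ≤ 1 - u ^ 2 := by
    rw [h1u]; positivity
  have h1vnn : 0 ≤ 1 - v ^ 2 := by
    rw [h1v]; positivity
  have husq : u ^ 2 ≤ 1 := by linarith
  have hvsq : v ^ 2 ≤ 1 := by linarith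
  have hu1 : -1 ≤ u := by nlinarith [sq_nonneg (u + 1)]
  have hu2 : u ≤ 1 := by nlinarith [sq_nonneg (u - 1)]
  have hv1 : -1 ≤ v := by nlinarith [sq_nonneg (v + 1)]
  have hv2 : v ≤ 1 := by nlinarith [sq_nonneg (v - 1)]
  have hd1 : sdist (x, y, z) (Real.cos e, -Real.sin e, 0) = Real.arccos u := by
    simp only [sdist, dot3]; ring_nf; rw [hu]
  have hd2 : sdist (x, y, z) (Real.cos e, Real.sin e, 0) = Real.arccos v := by
    simp only [sdist, dot3]; ring_nf; rw [hv]
  rw [hd1, hd2] at hdiff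
  have hcos : Real.cos (Real.arccos u - Real.arccos v) = Real.cos (2 * d) := by
    rw [← Real.cos_abs, hdiff]
  rw [Real.cos_sub, Real.cos_arccos hu1 hu2, Real.cos_arccos hv1 hv2,
    Real.sin_arccos, Real.sin_arccos] at hcos
  have hsq : Real.sqrt (1 - u ^ 2) * Real.sqrt (1 - v ^ 2) = Real.cos (2 * d) - u * v := by
    linarith [hcos]
  have key : (1 - u ^ 2) * (1 - v ^ 2) = (Real.cos (2 * d) - u * v) ^ 2 := by
    rw [← hsq, mul_pow, Real.sq_sqrt h1unn, Real.sq_sqrt h1vnn]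
  have hc2d : Real.cos (2 * d) = 1 - 2 * Real.sin d ^ 2 := by
    rw [Real.cos_two_mul']; linear_combination Real.sin_sq_add_cos_sq d
  rw [hu, hv, hc2d] at key
  have hmain : x ^ 2 * Real.cos e ^ 2 * Real.sin d ^ 2
      + y ^ 2 * Real.sin e ^ 2 * (1 - Real.sin d ^ 2)
      = Real.sin d ^ 2 * (1 - Real.sin d ^ 2) := by
    linear_combination (-1/4 : ℝ) * key
  have hpd : Real.cos d ^ 2 = 1 - Real.sin d ^ 2 := by
    linear_combination Real.sin_sq_add_cos_sq d
  have hcd2 : Real.cos d ^ 2 ≠ 0 := by positivity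
  have hsd2 : Real.sin d ^ 2 ≠ 0 := by positivity
  have hce2 : Real.cos e ^ 2 ≠ 0 := by positivity
  have hse2 : Real.sin e ^ 2 ≠ 0 := by positivity
  rw [div_div_eq_mul_div, div_div_eq_mul_div, div_add_div _ _ hcd2 hsd2,
    div_eq_one_iff_eq (mul_ne_zero hcd2 hsd2)]
  rw [hpd]
  linear_combination hmain
end

section
/- Consider the spherical curve ξ(t) = (A cos t, B sin t, z(t)) with z(t) = √(1 − A²cos²t − B²sin²t), where 0 < A, B < 1 or one of them in (0,1) and the cylinder meets the sphere (i.e. 1 − A²cos²t − B²sin²t > 0). Then the spherical angular momentum K = (x'y − xy')/|ξ'| satisfies K² = z²/(μ + c z²) wherever z ≠ 0, with μ = (A²−1)(1−B²)/(A²B²) and c = 1/(A²B²). -/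
open Real

set_option maxHeartbeats 800000 in
theorem angular_momentum_vertical_cylinder (A B : ℝ) (hA : 0 < A) (hB : 0 < B)
    (x y z K : ℝ → ℝ)
    (hx : x = fun t => A * Real.cos t)
    (hy : y = fun t => B * Real.sin t)
    (hz : z = fun t => Real.sqrt (1 - A ^ 2 * Real.cos t ^ 2 - B ^ 2 * Real.sin t ^ 2))
    (hK : K = fun t => (deriv x t * y t - x t * deriv y t) /
        Real.sqrt (deriv x t ^ 2 + deriv y t ^ 2 + deriv z t ^ 2))
    (t : ℝ) (hpos : 1 - A ^ 2 * Real.cos t ^ 2 - B ^ 2 * Real.sin t ^ 2 > 0)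
    (hzt : z t ≠ 0) :
    K t ^ 2 = z t ^ 2 /
      ((A ^ 2 - 1) * (1 - B ^ 2) / (A ^ 2 * B ^ 2) + (1 / (A ^ 2 * B ^ 2)) * z t ^ 2) := by
  have hzsq : z t ^ 2 = 1 - A ^ 2 * Real.cos t ^ 2 - B ^ 2 * Real.sin t ^ 2 := by
    rw [hz]; exact Real.sq_sqrt hpos.le
  have hz0 : 0 < z t := by rw [hz]; exact Real.sqrt_pos.mpr hpos
  have hdx : deriv x t = -(A * Real.sin t) := by
    rw [hx]; simp [mul_comm]
  have hdy : deriv y t = B * Real.cos t := by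
    rw [hy]; simp [mul_comm]
  have hdz : deriv z t = (A ^ 2 - B ^ 2) * Real.sin t * Real.cos t / z t := by
    have hf : HasDerivAt (fun u => 1 - A ^ 2 * Real.cos u ^ 2 - B ^ 2 * Real.sin u ^ 2)
        (2 * (A ^ 2 - B ^ 2) * Real.sin t * Real.cos t) t := by
      have h1 : HasDerivAt (fun u => 1 - A ^ 2 * Real.cos u ^ 2 - B ^ 2 * Real.sin u ^ 2)
          (0 - A ^ 2 * (2 * Real.cos t ^ 1 * (-Real.sin t))
             - B ^ 2 * (2 * Real.sin t ^ 1 * Real.cos t)) t :=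
        ((hasDerivAt_const t (1:ℝ)).sub
          (((Real.hasDerivAt_cos t).pow 2).const_mul (A ^ 2))).sub
          (((Real.hasDerivAt_sin t).pow 2).const_mul (B ^ 2))
      convert h1 using 1; ring
    have hne : 1 - A ^ 2 * Real.cos t ^ 2 - B ^ 2 * Real.sin t ^ 2 ≠ 0 := ne_of_gt hpos
    have h3 := (hf.sqrt hne).deriv
    have hzz : Real.sqrt (1 - A ^ 2 * Real.cos t ^ 2 - B ^ 2 * Real.sin t ^ 2) = z t := by
      rw [hz]
    conv_lhs => rw [hz]
    rw [h3, hzz, show (2:ℝ) * (A ^ 2 - B ^ 2) * Real.sin t * Real.cos t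
        = 2 * ((A ^ 2 - B ^ 2) * Real.sin t * Real.cos t) from by ring,
      mul_div_mul_left _ _ (by norm_num : (2:ℝ) ≠ 0)]
  set s := Real.sin t with hs
  set c := Real.cos t with hc
  have hsc : s ^ 2 + c ^ 2 = 1 := by rw [hs, hc]; exact Real.sin_sq_add_cos_sq t
  have hnum : deriv x t * y t - x t * deriv y t = -(A * B) := by
    rw [hdx, hdy, hx, hy]
    simp only
    rw [hs, hc]
    linear_combination (-(A * B)) * Real.sin_sq_add_cos_sq t
  have hD : deriv x t ^ 2 + deriv y t ^ 2 + deriv z t ^ 2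
      = A ^ 2 * s ^ 2 + B ^ 2 * c ^ 2 + ((A ^ 2 - B ^ 2) * s * c) ^ 2 / z t ^ 2 := by
    rw [hdx, hdy, hdz, div_pow]
    ring
  have h1 : 0 < A ^ 2 * s ^ 2 + B ^ 2 * c ^ 2 := by
    rcases eq_or_ne s 0 with h | h
    · have hc2 : c ^ 2 = 1 := by rw [h] at hsc; linarith [hsc]
      rw [h, hc2]; nlinarith [hB]
    · have h2 : 0 < s ^ 2 := by positivity
      nlinarith [sq_nonneg (B * c), mul_pos (mul_pos hA hA) h2]
  have hDpos : 0 < A ^ 2 * s ^ 2 + B ^ 2 * c ^ 2 + ((A ^ 2 - B ^ 2) * s * c) ^ 2 / z t ^ 2 := by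
    have h2 : 0 ≤ ((A ^ 2 - B ^ 2) * s * c) ^ 2 / z t ^ 2 := by positivity
    linarith
  have hK2 : K t ^ 2 = (A * B) ^ 2 / (A ^ 2 * s ^ 2 + B ^ 2 * c ^ 2
      + ((A ^ 2 - B ^ 2) * s * c) ^ 2 / z t ^ 2) := by
    rw [hK]
    simp only [hnum, hD, div_pow, Real.sq_sqrt hDpos.le]
    rw [neg_pow]
    norm_num
  have hAB : (0:ℝ) < A ^ 2 * B ^ 2 := by positivity
  have hw : z t ^ 2 = 1 - A ^ 2 * c ^ 2 - B ^ 2 * s ^ 2 := hzsq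
  have hkey : 0 < A ^ 2 * s ^ 2 + B ^ 2 * c ^ 2 - A ^ 2 * B ^ 2 := by
    have h4 : A ^ 2 * B ^ 2 * (s ^ 2 + c ^ 2) ^ 2 = A ^ 2 * B ^ 2 := by rw [hsc]; ring
    nlinarith [mul_pos h1 hpos, sq_nonneg ((A ^ 2 - B ^ 2) * s * c), h4]
  have hnumer : (A ^ 2 - 1) * (1 - B ^ 2) + z t ^ 2
      = A ^ 2 * s ^ 2 + B ^ 2 * c ^ 2 - A ^ 2 * B ^ 2 := by
    rw [hw]; linear_combination (-(A ^ 2 + B ^ 2)) * hsc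
  have hrden : (A ^ 2 - 1) * (1 - B ^ 2) / (A ^ 2 * B ^ 2) + 1 / (A ^ 2 * B ^ 2) * z t ^ 2
      = (A ^ 2 * s ^ 2 + B ^ 2 * c ^ 2 - A ^ 2 * B ^ 2) / (A ^ 2 * B ^ 2) := by
    rw [← hnumer, one_div, inv_mul_eq_div, ← add_div]
  have hz2 : z t ^ 2 ≠ 0 := pow_ne_zero 2 hzt
  have hDid : z t ^ 2 * (A ^ 2 * s ^ 2 + B ^ 2 * c ^ 2) + ((A ^ 2 - B ^ 2) * s * c) ^ 2
      = A ^ 2 * s ^ 2 + B ^ 2 * c ^ 2 - A ^ 2 * B ^ 2 := by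
    rw [hw]; linear_combination (-(A ^ 2 * B ^ 2 * (s ^ 2 + c ^ 2 + 1))) * hsc
  rw [hK2, hrden, div_div_eq_mul_div,
    div_eq_div_iff hDpos.ne' hkey.ne']
  have expand : A ^ 2 * s ^ 2 + B ^ 2 * c ^ 2 + ((A ^ 2 - B ^ 2) * s * c) ^ 2 / z t ^ 2
      = (z t ^ 2 * (A ^ 2 * s ^ 2 + B ^ 2 * c ^ 2) + ((A ^ 2 - B ^ 2) * s * c) ^ 2) / z t ^ 2 := by
    field_simp
  rw [expand, hDid]
  field_simp
end

section
/- Consider the spherical curve ξ(t) = (C cos t, y(t), D sin t) with y(t) = √(1 − C²cos²t − D²sin²t) > 0. Then its spherical angular momentum K = (x'y − xy')/|ξ'| satisfies K² = z²/(μ + c z²) wherever z = D sin t ≠ 0, with μ = D⁴(1−C²)/(C²(1−D²)²) and c = (C²−D²)/(C²(1−D²)²). -/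
open Real

theorem angular_momentum_horizontal_cylinder (C D : ℝ) (hC : 0 < C) (hD : 0 < D)
    (x y z K : ℝ → ℝ)
    (hx : x = fun t => C * Real.cos t)
    (hy : y = fun t => Real.sqrt (1 - C ^ 2 * Real.cos t ^ 2 - D ^ 2 * Real.sin t ^ 2))
    (hz : z = fun t => D * Real.sin t)
    (hK : K = fun t => (deriv x t * y t - x t * deriv y t) /
        Real.sqrt (deriv x t ^ 2 + deriv y t ^ 2 + deriv z t ^ 2))
    (t : ℝ) (hypos : y t > 0) (hzt : z t ≠ 0) :
    K t ^ 2 = z t ^ 2 /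
      (D ^ 4 * (1 - C ^ 2) / (C ^ 2 * (1 - D ^ 2) ^ 2)
        + ((C ^ 2 - D ^ 2) / (C ^ 2 * (1 - D ^ 2) ^ 2)) * z t ^ 2) := by
  have hs : Real.sin t ≠ 0 := by
    intro h; apply hzt; simp [hz, h]
  have hfpos : 0 < 1 - C ^ 2 * Real.cos t ^ 2 - D ^ 2 * Real.sin t ^ 2 := by
    have h := hypos; rw [hy] at h; exact Real.sqrt_pos.mp h
  have hwsq : y t ^ 2 = 1 - C ^ 2 * Real.cos t ^ 2 - D ^ 2 * Real.sin t ^ 2 := by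
    rw [hy]; exact Real.sq_sqrt hfpos.le
  have hwne : y t ≠ 0 := ne_of_gt hypos
  have hsc : Real.sin t ^ 2 + Real.cos t ^ 2 = 1 := Real.sin_sq_add_cos_sq t
  have hdx : deriv x t = -(C * Real.sin t) := by
    rw [hx]
    have := ((Real.hasDerivAt_cos t).const_mul C).deriv
    simpa [mul_neg] using this
  have hdz : deriv z t = D * Real.cos t := by
    rw [hz]
    exact ((Real.hasDerivAt_sin t).const_mul D).deriv
  have hdf : HasDerivAt (fun u => 1 - C ^ 2 * Real.cos u ^ 2 - D ^ 2 * Real.sin u ^ 2)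
      (2 * (C ^ 2 - D ^ 2) * Real.sin t * Real.cos t) t := by
    have hA := ((Real.hasDerivAt_cos t).pow 2).const_mul (C ^ 2)
    have hB := ((Real.hasDerivAt_sin t).pow 2).const_mul (D ^ 2)
    have h := ((hasDerivAt_const t (1 : ℝ)).sub hA).sub hB
    refine h.congr_deriv ?_
    norm_num
    ring
  have hdy : deriv y t = (C ^ 2 - D ^ 2) * Real.sin t * Real.cos t / y t := by
    have h := (hdf.sqrt hfpos.ne').deriv
    rw [hy] at hwne ⊢
    rw [h]
    field_simp
  set s := Real.sin t with hsdef
  set c := Real.cos t with hcdef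
  set w := y t with hwdef
  have hQpos : 0 < C ^ 2 * s ^ 2 + D ^ 2 * c ^ 2 - C ^ 2 * D ^ 2 := by
    have key : C ^ 2 * s ^ 2 + D ^ 2 * c ^ 2 - C ^ 2 * D ^ 2
        = (C ^ 2 * s ^ 2 + D ^ 2 * c ^ 2) * w ^ 2 + (C ^ 2 - D ^ 2) ^ 2 * s ^ 2 * c ^ 2 := by
      rw [hwsq]
      linear_combination (C ^ 2 * D ^ 2 * (s ^ 2 + c ^ 2 + 1)) * hsc
    have hs2 : 0 < s ^ 2 := lt_of_le_of_ne (sq_nonneg s) (Ne.symm (pow_ne_zero 2 hs))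
    nlinarith [sq_nonneg ((C ^ 2 - D ^ 2) * s * c), sq_nonneg (D * c * w),
      mul_pos (mul_pos (pow_pos hC 2) hs2) (pow_pos hypos 2)]
  set Q := C ^ 2 * s ^ 2 + D ^ 2 * c ^ 2 - C ^ 2 * D ^ 2 with hQdef
  have hE : deriv x t ^ 2 + deriv y t ^ 2 + deriv z t ^ 2 = Q / w ^ 2 := by
    rw [hdx, hdy, hdz, hQdef]
    field_simp
    linear_combination (C ^ 2 * s ^ 2 + D ^ 2 * c ^ 2) * hwsq
      + (-(C ^ 2 * D ^ 2 * (s ^ 2 + c ^ 2 + 1))) * hsc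
  have hEpos : 0 < Q / w ^ 2 := div_pos hQpos (by positivity)
  have hN : deriv x t * w - x t * deriv y t = -(C * s * (1 - D ^ 2)) / w := by
    rw [hdx, hdy, hx]
    field_simp
    rw [← hcdef]
    linear_combination (-1) * hwsq + (D ^ 2) * hsc
  have hKsq : K t ^ 2 = C ^ 2 * s ^ 2 * (1 - D ^ 2) ^ 2 / Q := by
    rw [hK]
    simp only
    rw [hN, hE, div_pow, Real.sq_sqrt hEpos.le]
    field_simp
  rw [hKsq, hz]
  simp only
  by_cases hD1 : 1 - D ^ 2 = 0
  · rw [hD1]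
    simp
  · have hQ : Q = (C ^ 2 - D ^ 2) * s ^ 2 + D ^ 2 * (1 - C ^ 2) := by
      rw [hQdef]; linear_combination (D ^ 2) * hsc
    have hden : D ^ 4 * (1 - C ^ 2) / (C ^ 2 * (1 - D ^ 2) ^ 2)
          + ((C ^ 2 - D ^ 2) / (C ^ 2 * (1 - D ^ 2) ^ 2)) * (D * s) ^ 2
        = (D ^ 2 * Q) / (C ^ 2 * (1 - D ^ 2) ^ 2) := by
      rw [hQ]; field_simp; ring
    rw [hden, div_div_eq_mul_div]
    rw [div_eq_div_iff hQpos.ne' (by positivity)]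
    ring
end

section
/- Let μ < 0 and c ∈ R, and suppose there exists z with 0 < z² ≤ 1, μ + c z² > 0, and z²/(μ + c z²) + z² < 1. Then c > 1, μ + c > 1, and (μ − c + 1)² + 4cμ > 0. -/
theorem negative_mu_restrictions (μ c : ℝ) (hμ : μ < 0)
    (h : ∃ z : ℝ, 0 < z ^ 2 ∧ z ^ 2 ≤ 1 ∧ μ + c * z ^ 2 > 0 ∧
        z ^ 2 / (μ + c * z ^ 2) + z ^ 2 < 1) :
    c > 1 ∧ μ + c > 1 ∧ (μ - c + 1) ^ 2 + 4 * c * μ > 0 := by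
  obtain ⟨z, ht0, ht1, hpos, hlt⟩ := h
  set t := z ^ 2 with ht
  have key : t < (1 - t) * (μ + c * t) := by
    have h2 : t / (μ + c * t) < 1 - t := by linarith
    exact (div_lt_iff₀ hpos).mp h2
  have h1t : t < 1 := by
    by_contra hc
    push_neg at hc
    nlinarith
  have hc1 : c > 1 := by
    nlinarith [mul_pos ht0 (by linarith : (0:ℝ) < 1 - t), sq_nonneg t, mul_pos ht0 ht0]
  refine ⟨hc1, ?_, ?_⟩
  · nlinarith [mul_pos ht0 (by linarith : (0:ℝ) < 1 - t), sq_nonneg (1 - t), mul_pos ht0 ht0]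
  · nlinarith [sq_nonneg (2 * c * t + (μ - c + 1)), mul_pos ht0 ht0]
end

section
/- Let μ < 0, c > 0 with μ + c > 1 and (μ − c + 1)² + 4cμ > 0. Define A² = (μ+c+1+√((μ−c+1)²+4cμ))/(2c) and B² = (μ+c+1−√((μ−c+1)²+4cμ))/(2c). Then 0 < B² < A² < 1, and moreover (A²−1)(1−B²)/(A²B²) = μ and 1/(A²B²) = c. -/
theorem recover_axes_typeI (μ c : ℝ) (hμ : μ < 0) (hc : 0 < c)
    (hsum : μ + c > 1) (hdisc : (μ - c + 1) ^ 2 + 4 * c * μ > 0)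
    (A2 B2 : ℝ)
    (hA2 : A2 = (μ + c + 1 + Real.sqrt ((μ - c + 1) ^ 2 + 4 * c * μ)) / (2 * c))
    (hB2 : B2 = (μ + c + 1 - Real.sqrt ((μ - c + 1) ^ 2 + 4 * c * μ)) / (2 * c)) :
    0 < B2 ∧ B2 < A2 ∧ A2 < 1 ∧
    (A2 - 1) * (1 - B2) / (A2 * B2) = μ ∧ 1 / (A2 * B2) = c := by
  set s := Real.sqrt ((μ - c + 1) ^ 2 + 4 * c * μ) with hs
  have hs2 : s ^ 2 = (μ - c + 1) ^ 2 + 4 * c * μ := Real.sq_sqrt hdisc.le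
  have hspos : 0 < s := Real.sqrt_pos.mpr hdisc
  have h1 : s < μ + c + 1 := by nlinarith
  have h2 : s < c - μ - 1 := by nlinarith
  have hB2pos : 0 < B2 := by
    rw [hB2]; exact div_pos (by linarith) (by linarith)
  have hA2pos : 0 < A2 := by
    rw [hA2]; exact div_pos (by linarith) (by linarith)
  have hAB : A2 * B2 = 1 / c := by
    rw [hA2, hB2]
    field_simp
    linear_combination (-1) * hs2
  have hnum : (A2 - 1) * (1 - B2) = μ / c := by
    rw [hA2, hB2]
    field_simp
    linear_combination hs2
  refine ⟨hB2pos, ?_, ?_, ?_, ?_⟩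
  · rw [hA2, hB2]
    apply div_lt_div_of_pos_right (by linarith) (by linarith)
  · rw [hA2, div_lt_one (by linarith)]; linarith
  · rw [hnum, hAB]
    field_simp
  · rw [hAB, one_div_one_div]
end

section
/- Let μ > 0 and c < 0. Define D² = (c−μ−1 − √((μ−c+1)²+4cμ))/(2c). Then (μ−c+1)²+4cμ > 0, D² > 1, c D⁴ + (μ−c+1)D² − μ = 0, and setting C² = D²/(1 − c(1−D²)²) one has 0 < C² < 1 as well as D⁴(1−C²)/(C²(1−D²)²) = μ and (C²−D²)/(C²(1−D²)²) = c. -/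
theorem recover_axes_typeIII (μ c : ℝ) (hμ : 0 < μ) (hc : c < 0)
    (D2 : ℝ)
    (hD2 : D2 = (c - μ - 1 - Real.sqrt ((μ - c + 1) ^ 2 + 4 * c * μ)) / (2 * c)) :
    (μ - c + 1) ^ 2 + 4 * c * μ > 0 ∧
    D2 > 1 ∧
    c * D2 ^ 2 + (μ - c + 1) * D2 - μ = 0 ∧
    ∀ C2 : ℝ, C2 = D2 / (1 - c * (1 - D2) ^ 2) →
      0 < C2 ∧ C2 < 1 ∧
      D2 ^ 2 * (1 - C2) / (C2 * (1 - D2) ^ 2) = μ ∧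
      (C2 - D2) / (C2 * (1 - D2) ^ 2) = c := by
  have hΔ : (μ - c + 1) ^ 2 + 4 * c * μ > 0 := by nlinarith [sq_nonneg (μ + c + 1)]
  set s := Real.sqrt ((μ - c + 1) ^ 2 + 4 * c * μ) with hs
  have hs2 : s ^ 2 = (μ - c + 1) ^ 2 + 4 * c * μ := Real.sq_sqrt hΔ.le
  have hspos : 0 < s := Real.sqrt_pos.mpr hΔ
  -- s > |μ + c + 1|
  have hsgt : s > -(μ + c + 1) ∧ s > μ + c + 1 := by
    constructor <;> nlinarith [hs2, hspos, sq_nonneg (s + (μ + c + 1)), sq_nonneg (s - (μ + c + 1))]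
  have hc2 : (2 : ℝ) * c ≠ 0 := by linarith
  have hD2' : 2 * c * D2 = c - μ - 1 - s := by
    rw [hD2]; field_simp
    exact mul_div_cancel_left₀ _ (ne_of_lt hc)
  have hroot : c * D2 ^ 2 + (μ - c + 1) * D2 - μ = 0 := by
    have h4 : 4 * c ^ 2 * (c * D2 ^ 2 + (μ - c + 1) * D2 - μ) = 0 := by
      linear_combination (c * (2 * c * D2 + (c - μ - 1 - s)) + 2 * c * (μ - c + 1)) * hD2' + c * hs2
    have hc0 : c ≠ 0 := ne_of_lt hc
    have h4c : (4 : ℝ) * c ^ 2 ≠ 0 := by positivity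
    exact (mul_eq_zero.mp h4).resolve_left h4c
  have hD2gt1 : D2 > 1 := by
    have h1 : c - μ - 1 - s < 2 * c := by nlinarith [hsgt.1]
    nlinarith [hD2', hc]
  refine ⟨hΔ, hD2gt1, hroot, ?_⟩
  intro C2 hC2
  have hE : 0 < 1 - c * (1 - D2) ^ 2 := by nlinarith [sq_nonneg (1 - D2)]
  have hkey : -c * (D2 - 1) > 1 := by
    -- from cD2(D2-1) = -μ(D2-1) - D2
    nlinarith [hroot, hD2gt1, hμ, mul_pos hμ (sub_pos.mpr hD2gt1)]
  have hC2pos : 0 < C2 := by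
    rw [hC2]; positivity
  have hC2lt1 : C2 < 1 := by
    rw [hC2, div_lt_one hE]
    nlinarith [hkey, sub_pos.mpr hD2gt1]
  have hDne : (1 - D2) ≠ 0 := by nlinarith
  have hEne : (1 - c * (1 - D2) ^ 2) ≠ 0 := ne_of_gt hE
  refine ⟨hC2pos, hC2lt1, ?_, ?_⟩
  · rw [hC2]
    field_simp
    nlinarith [hroot]
  · rw [hC2]
    field_simp
    ring
end

section
/- Let a ≠ 0 and consider the curve ξ(t) = (x(t), t²/(2a), t) on S² with x(t) = √(4a² − 4a²t² − t⁴)/(2a), defined for t where 4a² − 4a²t² − t⁴ > 0. Then ξ lies on the circle x² + (y+a)² = 1 + a², and its spherical angular momentum satisfies K(z) = z(z² − 2)/√(4(a² + z²) − z⁴) where z = t. -/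
open Real

theorem fake_paraboloid_generatrix (a : ℝ) (ha : a ≠ 0)
    (x y z K : ℝ → ℝ)
    (hx : x = fun t => Real.sqrt (4 * a ^ 2 - 4 * a ^ 2 * t ^ 2 - t ^ 4) / (2 * a))
    (hy : y = fun t => t ^ 2 / (2 * a))
    (hz : z = fun t => t)
    (hK : K = fun t => (deriv x t * y t - x t * deriv y t) /
        Real.sqrt (deriv x t ^ 2 + deriv y t ^ 2 + deriv z t ^ 2))
    (t : ℝ) (hpos : 4 * a ^ 2 - 4 * a ^ 2 * t ^ 2 - t ^ 4 > 0) :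
    x t ^ 2 + (y t + a) ^ 2 = 1 + a ^ 2 ∧
    K t = z t * (z t ^ 2 - 2) / Real.sqrt (4 * (a ^ 2 + z t ^ 2) - z t ^ 4) := by
  have hG : (0:ℝ) < 4 * a ^ 2 - 4 * a ^ 2 * t ^ 2 - t ^ 4 := hpos
  set G : ℝ := 4 * a ^ 2 - 4 * a ^ 2 * t ^ 2 - t ^ 4 with hGdef
  have hsgpos : 0 < Real.sqrt G := Real.sqrt_pos.mpr hG
  set s : ℝ := Real.sqrt G with hsdef
  have hs2 : s ^ 2 = G := Real.sq_sqrt hG.le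
  -- derivative of the inner polynomial
  have hP : HasDerivAt (fun u : ℝ => 4 * a ^ 2 - 4 * a ^ 2 * u ^ 2 - t ^ 4 + (t ^ 4 - u ^ 4))
      (-(8 * a ^ 2 * t) - 4 * t ^ 3) t := by
    have h1 : HasDerivAt (fun u : ℝ => 4 * a ^ 2 - 4 * a ^ 2 * u ^ 2 - t ^ 4 + (t ^ 4 - u ^ 4))
        (4 * a ^ 2 * 0 - 4 * a ^ 2 * (2 * t ^ 1) - 0 + (0 - 4 * t ^ 3)) t := by
      have hu2 : HasDerivAt (fun u : ℝ => u ^ 2) (2 * t ^ 1) t := hasDerivAt_pow 2 t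
      have hu4 : HasDerivAt (fun u : ℝ => u ^ 4) (4 * t ^ 3) t := by
        simpa using hasDerivAt_pow 4 t
      have := (((hasDerivAt_const t (4 * a ^ 2)).sub (hu2.const_mul (4 * a ^ 2))).sub
        (hasDerivAt_const t (t ^ 4))).add ((hasDerivAt_const t (t ^ 4)).sub hu4)
      exact this.congr_deriv (by ring)
    convert h1 using 1
    ring
  have hP' : HasDerivAt (fun u : ℝ => 4 * a ^ 2 - 4 * a ^ 2 * u ^ 2 - u ^ 4)
      (-(8 * a ^ 2 * t) - 4 * t ^ 3) t := by
    have : (fun u : ℝ => 4 * a ^ 2 - 4 * a ^ 2 * u ^ 2 - t ^ 4 + (t ^ 4 - u ^ 4))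
        = fun u : ℝ => 4 * a ^ 2 - 4 * a ^ 2 * u ^ 2 - u ^ 4 := by
      funext u; ring
    rwa [this] at hP
  have hsq : HasDerivAt (fun u : ℝ => Real.sqrt (4 * a ^ 2 - 4 * a ^ 2 * u ^ 2 - u ^ 4))
      (1 / (2 * s) * (-(8 * a ^ 2 * t) - 4 * t ^ 3)) t := by
    have := (Real.hasDerivAt_sqrt hG.ne').comp t hP'
    exact this
  have hxderiv : deriv x t = (1 / (2 * s) * (-(8 * a ^ 2 * t) - 4 * t ^ 3)) / (2 * a) := by
    rw [hx]
    exact (hsq.div_const (2 * a)).deriv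
  have hyderiv : deriv y t = 2 * t / (2 * a) := by
    rw [hy]
    have : HasDerivAt (fun u : ℝ => u ^ 2 / (2 * a)) (2 * t ^ 1 / (2 * a)) t :=
      (hasDerivAt_pow 2 t).div_const (2 * a)
    simpa using this.deriv
  have hzderiv : deriv z t = 1 := by rw [hz]; simp
  have hs0 : s ≠ 0 := hsgpos.ne'
  have hxv : x t = s / (2 * a) := by rw [hx]
  have hyv : y t = t ^ 2 / (2 * a) := by rw [hy]
  have hzt : z t = t := by rw [hz]
  constructor
  · rw [hxv, hyv]
    field_simp
    linear_combination hs2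
  · rw [hK]
    simp only [hxderiv, hyderiv, hzderiv, hxv, hyv, hzt]
    have hD : (0:ℝ) < 4 * (a ^ 2 + t ^ 2) - t ^ 4 := by nlinarith
    set D : ℝ := 4 * (a ^ 2 + t ^ 2) - t ^ 4 with hDdef
    have hNum : (1 / (2 * s) * (-(8 * a ^ 2 * t) - 4 * t ^ 3)) / (2 * a) * (t ^ 2 / (2 * a))
        - s / (2 * a) * (2 * t / (2 * a)) = t * (t ^ 2 - 2) / s := by
      field_simp
      linear_combination (-(4 * t)) * hs2
    have hDen : ((1 / (2 * s) * (-(8 * a ^ 2 * t) - 4 * t ^ 3)) / (2 * a)) ^ 2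
        + (2 * t / (2 * a)) ^ 2 + (1:ℝ) ^ 2 = D / s ^ 2 := by
      field_simp
      linear_combination (16 * (t ^ 2 + a ^ 2)) * hs2
    rw [hNum, hDen]
    have hsqrtden : Real.sqrt (D / s ^ 2) = Real.sqrt D / s := by
      rw [Real.sqrt_div hD.le, Real.sqrt_sq hsgpos.le]
    rw [hsqrtden]
    have hDs : Real.sqrt D ≠ 0 := (Real.sqrt_pos.mpr hD).ne'
    field_simp
end
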